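/- arXiv:2007.09115 — 2 statements merged into one kernel-verified Lean document; each statement's English description precedes it below -/
import Mathlib

section
/- The non-parametric scale-convolution defined by [f₁ ⋆_H f₂](s, t) = L_{s⁻¹}[ L_s[f₁] ⋆ f₂ ](t) is equivariant under scaling of its first argument: for all ŝ > 0, [L_ŝ[f₁] ⋆_H f₂](s, t) = L_ŝ[ f₁ ⋆_H f₂ ](s·ŝ, ·)(t), where on the right L_ŝ acts on the translation variable. -/
open MeasureTheory

noncomputable def conv (f g : ℝ → ℝ) : ℝ → ℝ := fun t => ∫ t', f t' * g (t - t')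

noncomputable def Lscale (s : ℝ) (f : ℝ → ℝ) : ℝ → ℝ := fun t => f (s⁻¹ * t)

/-- Non-parametric scale-convolution `[f₁ ⋆_H f₂](s, t) = L_{s⁻¹}[ L_s[f₁] ⋆ f₂ ](t)`. -/
noncomputable def scaleConv (f₁ f₂ : ℝ → ℝ) (s t : ℝ) : ℝ :=
  Lscale s⁻¹ (conv (Lscale s f₁) f₂) t

/-- Equivariance under scaling of the first argument:
`[L_sHat[f₁] ⋆_H f₂](s, t) = L_sHat[(f₁ ⋆_H f₂)(s·sHat, ·)](t)`. -/
theorem stmt5 (f₁ f₂ : ℝ → ℝ) (hf₁ : Integrable f₁) (hf₂ : Integrable f₂)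
    (sHat : ℝ) (hsHat : 0 < sHat) (s : ℝ) (hs : 0 < s) (t : ℝ) :
    scaleConv (Lscale sHat f₁) f₂ s t = Lscale sHat (scaleConv f₁ f₂ (s * sHat)) t := by
  unfold scaleConv conv Lscale
  apply congrArg
  funext t'
  have h1 : sHat⁻¹ * (s⁻¹ * t') = (s * sHat)⁻¹ * t' := by
    rw [mul_inv]; ring
  have h2 : s⁻¹⁻¹ * t - t' = (s * sHat)⁻¹⁻¹ * (sHat⁻¹ * t) - t' := by
    have hss : s * sHat ≠ 0 := by positivity
    field_simp
  rw [h1, h2]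
end

section
/- The non-parametric scale-convolution [f₁ ⋆_H f₂](s, t) = L_{s⁻¹}[ L_s[f₁] ⋆ f₂ ](t) is equivariant under translation of its first argument: for all t̂ ∈ ℝ, [T_t̂[f₁] ⋆_H f₂](s, t) = [f₁ ⋆_H f₂](s, t - t̂). -/
open MeasureTheory

noncomputable def Ttrans (τ : ℝ) (f : ℝ → ℝ) : ℝ → ℝ := fun t => f (t - τ)

/-! Translating `f₁` by `t̂` and then dilating by `s` is the same as dilating first and translating
by `s t̂`; convolution commutes with translations, and the outer dilation by `s⁻¹` turns the
translation by `s t̂` back into one by `t̂`. -/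

theorem conv_Ttrans_left (τ : ℝ) (f g : ℝ → ℝ) :
    conv (Ttrans τ f) g = Ttrans τ (conv f g) := by
  ext t
  have shift : ∀ t', f (t' - τ) * g (t - t') = f (t' - τ) * g (t - τ - (t' - τ)) := fun t' => by
    ring_nf
  simp only [conv, Ttrans, shift]
  exact integral_sub_right_eq_self (fun u => f u * g (t - τ - u)) τ

theorem Lscale_Ttrans {s : ℝ} (hs : s ≠ 0) (τ : ℝ) (f : ℝ → ℝ) :
    Lscale s (Ttrans τ f) = Ttrans (s * τ) (Lscale s f) := by
  ext t
  simp only [Lscale, Ttrans]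
  congr 1
  field_simp

theorem stmt6_general (f₁ f₂ : ℝ → ℝ)
    (tHat : ℝ) (s : ℝ) (hs : 0 < s) (t : ℝ) :
    scaleConv (Ttrans tHat f₁) f₂ s t = scaleConv f₁ f₂ s (t - tHat) := by
  have hs₀ : s ≠ 0 := hs.ne'
  calc scaleConv (Ttrans tHat f₁) f₂ s t
      = Lscale s⁻¹ (Ttrans (s * tHat) (conv (Lscale s f₁) f₂)) t := by
        rw [scaleConv, Lscale_Ttrans hs₀, conv_Ttrans_left]
    _ = Ttrans tHat (Lscale s⁻¹ (conv (Lscale s f₁) f₂)) t := by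
        rw [Lscale_Ttrans (inv_ne_zero hs₀), inv_mul_cancel_left₀ hs₀]
    _ = scaleConv f₁ f₂ s (t - tHat) := rfl

/-- Equivariance under translation of the first argument:
`[T_tHat[f₁] ⋆_H f₂](s, t) = [f₁ ⋆_H f₂](s, t - tHat)`. -/
theorem stmt6 (f₁ f₂ : ℝ → ℝ) (hf₁ : Integrable f₁) (hf₂ : Integrable f₂)
    (tHat : ℝ) (s : ℝ) (hs : 0 < s) (t : ℝ) :
    scaleConv (Ttrans tHat f₁) f₂ s t = scaleConv f₁ f₂ s (t - tHat) :=
  stmt6_general f₁ f₂ tHat s hs t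
end
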